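/- Every quiver in the mutation class of the Dynkin quiver A_k has at most 2k - 2 arrows, and each vertex has valency at most 4. -/

import Mathlib

/-!
Arrows of a quiver without loops, multiple arrows or 2-cycles correspond to edges of its
underlying graph `G`. Fix a spanning tree `T` of `G`. Since every cycle of `G` is a triangle,
each edge of `G` outside `T` closes a triangle with two edges of `T`; two such triangles cannot
share a tree edge, as together they would contain a 4-cycle. Hence `G` has at most twice as many
edges as `T`, that is at most `2k - 2`.
-/

/-- The valency of a vertex: the number of arrows incident with it. -/
noncomputable def valency {V E : Type} (src tgt : E → V) (x : V) : ℕ :=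
  {e : E | src e = x ∨ tgt e = x}.ncard

/-- Three arrows forming an oriented 3-cycle. -/
def IsOriented3Cycle {V E : Type} (src tgt : E → V) (a b c : E) : Prop :=
  tgt a = src b ∧ tgt b = src c ∧ tgt c = src a ∧
  src a ≠ src b ∧ src b ≠ src c ∧ src c ≠ src a

/-- Two arrows lie on a common oriented 3-cycle. -/
def OnCommon3Cycle {V E : Type} (src tgt : E → V) (e f : E) : Prop :=
  ∃ a b c : E, IsOriented3Cycle src tgt a b c ∧
    e ∈ ({a, b, c} : Set E) ∧ f ∈ ({a, b, c} : Set E)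

/-- An arrow lies on an oriented 3-cycle. -/
def On3Cycle {V E : Type} (src tgt : E → V) (e : E) : Prop :=
  OnCommon3Cycle src tgt e e

/-- The underlying graph of a quiver. -/
def underlyingGraph {V E : Type} (src tgt : E → V) : SimpleGraph V where
  Adj x y := x ≠ y ∧ ∃ e : E, (src e = x ∧ tgt e = y) ∨ (src e = y ∧ tgt e = x)
  symm := by
    constructor
    intro x y h
    exact ⟨h.1.symm, by obtain ⟨-, e, he⟩ := h; exact ⟨e, he.symm⟩⟩
  loopless := by constructor; intro x h; exact h.1 rfl

/-- The combinatorial characterization of the quivers in the mutation class of `A_k`: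
connected quivers with `k` vertices, no loops or 2-cycles, every vertex of valency at most
four, all non-trivial cycles oriented of length 3, a vertex of valency four having its arrows
split into two pairs lying on two distinct 3-cycles, and a vertex of valency three having two
arrows on a 3-cycle and one arrow on no 3-cycle. -/
structure IsInMutationClassA {V E : Type} [Fintype V] [Fintype E]
    (src tgt : E → V) (k : ℕ) : Prop where
  connected : (underlyingGraph src tgt).Connected
  card_vertices : Fintype.card V = k
  no_loops : ∀ e : E, src e ≠ tgt e
  no_multiple_arrows : ∀ e f : E, src e = src f → tgt e = tgt f → e = f
  no_two_cycles : ∀ e f : E, tgt e = src f → tgt f = src e → False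
  valency_le_four : ∀ x : V, valency src tgt x ≤ 4
  cycles_length_three :
    ∀ (x : V) (w : (underlyingGraph src tgt).Walk x x), w.IsCycle → w.length = 3
  triangles_oriented : ∀ x y z : V, (underlyingGraph src tgt).Adj x y →
    (underlyingGraph src tgt).Adj y z → (underlyingGraph src tgt).Adj z x →
    ∃ a b c : E, IsOriented3Cycle src tgt a b c ∧
      ({src a, src b, src c} : Set V) = {x, y, z}
  valency_four_split : ∀ x : V, valency src tgt x = 4 →
    ∃ e₁ e₂ e₃ e₄ : E, {e : E | src e = x ∨ tgt e = x} = {e₁, e₂, e₃, e₄} ∧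
      OnCommon3Cycle src tgt e₁ e₂ ∧ OnCommon3Cycle src tgt e₃ e₄ ∧
      ¬ OnCommon3Cycle src tgt e₁ e₃
  valency_three_split : ∀ x : V, valency src tgt x = 3 →
    ∃ e₁ e₂ e₃ : E, {e : E | src e = x ∨ tgt e = x} = {e₁, e₂, e₃} ∧
      OnCommon3Cycle src tgt e₁ e₂ ∧ ¬ On3Cycle src tgt e₃

namespace SimpleGraph

variable {V : Type*} {G : SimpleGraph V}

theorem eq_of_adj_of_forall_isCycle_length_eq_three
    (hG : ∀ (x : V) (w : G.Walk x x), w.IsCycle → w.length = 3) {a b c d : V}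
    (hac : G.Adj a c) (hbc : G.Adj b c) (had : G.Adj a d) (hbd : G.Adj b d) (hab : a ≠ b) :
    c = d := by
  by_contra hcd
  have hsquare : (Walk.cons hac (Walk.cons hbc.symm (Walk.cons hbd had.symm.toWalk))).IsCycle := by
    rw [Walk.cons_isCycle_iff]
    simp [Walk.isPath_def, hab, hcd, hac.ne, hbc.ne.symm, had.ne, hbd.ne, hac.ne.symm,
      had.ne.symm, Ne.symm hab]
  simpa using hG a _ hsquare

theorem exists_adj_adj_of_isTree_le {T : SimpleGraph V}
    (hG : ∀ (x : V) (w : G.Walk x x), w.IsCycle → w.length = 3)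
    (hT : T.IsTree) (hTG : T ≤ G) {x y : V} (hxy : G.Adj x y) (hTxy : ¬ T.Adj x y) :
    ∃ m, T.Adj x m ∧ T.Adj m y := by
  obtain ⟨p, hp, -⟩ := hT.existsUnique_path y x
  have hcycle : (Walk.cons hxy (p.mapLe hTG)).IsCycle := by
    rw [Walk.cons_isCycle_iff, Walk.edges_mapLe_eq_edges]
    exact ⟨hp.mapLe hTG, fun h => hTxy (p.edges_subset_edgeSet h)⟩
  have hlen : p.length = 2 := by simpa using hG x _ hcycle
  obtain ⟨hym, hxm⟩ := (T.walkLengthTwoEquivCommonNeighbors y x ⟨p, hlen⟩).prop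
  exact ⟨_, hxm, hym.symm⟩

open Finset in
theorem card_edgeFinset_le_of_forall_isCycle_length_eq_three [Fintype V] [Fintype G.edgeSet]
    (hG : ∀ (x : V) (w : G.Walk x x), w.IsCycle → w.length = 3) (hconn : G.Connected) :
    #G.edgeFinset ≤ 2 * (Fintype.card V - 1) := by
  classical
  obtain ⟨T, hTG, hT⟩ := hconn.exists_isTree_le
  have htriangle : ∀ e ∈ G.edgeFinset \ T.edgeFinset, ∃ x y m, e = s(x, y) ∧ G.Adj x y ∧
      ¬ T.Adj x y ∧ T.Adj x m ∧ T.Adj m y := by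
    intro e he
    simp only [mem_sdiff, mem_edgeFinset] at he
    induction e using Sym2.ind with
    | _ x y =>
      obtain ⟨m, hxm, hmy⟩ := exists_adj_adj_of_isTree_le hG hT hTG he.1 he.2
      exact ⟨x, y, m, rfl, he.1, he.2, hxm, hmy⟩
  have : Nonempty V := hconn.nonempty
  choose! x y m hxy hGxy hTxy hxm hmy using htriangle
  have hinj : Set.InjOn (fun e => s(x e, m e)) ↑(G.edgeFinset \ T.edgeFinset) := by
    intro e he f hf hef
    rcases Sym2.eq_iff.mp hef with ⟨hx, hm⟩ | ⟨hx, hm⟩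
    · have hy : y e = y f := eq_of_adj_of_forall_isCycle_length_eq_three hG (hGxy e he)
        (hTG (hmy e he)) (hx ▸ hGxy f hf) (hm ▸ hTG (hmy f hf)) (hxm e he).ne
      rw [hxy e he, hxy f hf, hx, hy]
    · have hy : y e = y f := eq_of_adj_of_forall_isCycle_length_eq_three hG (hGxy e he)
        (hTG (hmy e he)) (hx ▸ hTG (hmy f hf)) (hm ▸ hGxy f hf) (hxm e he).ne
      exact absurd (hm ▸ hy ▸ hmy e he) (hTxy f hf)
  have hmaps : ∀ e ∈ G.edgeFinset \ T.edgeFinset, s(x e, m e) ∈ T.edgeFinset :=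
    fun e he => mem_edgeFinset.mpr (hxm e he)
  have hcard := card_le_card_of_injOn _ hmaps hinj
  have hsplit := card_sdiff_add_card_eq_card (edgeFinset_mono hTG)
  have htree := hT.card_edgeFinset
  omega

end SimpleGraph

theorem card_le_card_edgeSet_underlyingGraph {V E : Type} [Fintype E] (src tgt : E → V)
    [Fintype (underlyingGraph src tgt).edgeSet] (no_loops : ∀ e : E, src e ≠ tgt e)
    (no_multiple_arrows : ∀ e f : E, src e = src f → tgt e = tgt f → e = f)
    (no_two_cycles : ∀ e f : E, tgt e = src f → tgt f = src e → False) :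
    Fintype.card E ≤ Fintype.card (underlyingGraph src tgt).edgeSet := by
  refine Fintype.card_le_of_injective
    (fun e => ⟨s(src e, tgt e), ⟨no_loops e, e, Or.inl ⟨rfl, rfl⟩⟩⟩) fun e f hef => ?_
  rcases Sym2.eq_iff.mp (Subtype.mk.inj hef) with ⟨hs, ht⟩ | ⟨hs, ht⟩
  · exact no_multiple_arrows e f hs ht
  · exact (no_two_cycles e f ht hs.symm).elim

/-- Every quiver in the mutation class of `A_k` has at most `2k - 2` arrows, and each of its
vertices has valency at most 4. -/
theorem stmt3 {V E : Type} [Fintype V] [Fintype E] (src tgt : E → V) (k : ℕ)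
    (h : IsInMutationClassA src tgt k) :
    Fintype.card E ≤ 2 * k - 2 ∧ ∀ x : V, valency src tgt x ≤ 4 := by
  classical
  refine ⟨?_, h.valency_le_four⟩
  have harrows := card_le_card_edgeSet_underlyingGraph src tgt h.no_loops
    h.no_multiple_arrows h.no_two_cycles
  have hedges := SimpleGraph.card_edgeFinset_le_of_forall_isCycle_length_eq_three
    h.cycles_length_three h.connected
  have : Nonempty V := h.connected.nonempty
  have hk : 0 < k := h.card_vertices ▸ Fintype.card_pos
  rw [SimpleGraph.edgeFinset_card, h.card_vertices] at hedges
  omega
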